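/- arXiv:1110.4539 — 2 statements merged into one kernel-verified Lean document; each statement's English description precedes it below -/
import Mathlib

section
/- A maximal ancestral graph H is Markov equivalent to some undirected graph if and only if H contains no unshielded collider V-configuration. -/
/-- A loopless mixed graph with three kinds of edges: lines (undirected),
arrows (directed, `arrow i j` means `i → j`), and arcs (bidirected). -/
structure MixedGraph (V : Type*) where
  line : V → V → Prop
  arrow : V → V → Prop
  arc : V → V → Prop
  line_symm : ∀ i j, line i j → line j i
  arc_symm : ∀ i j, arc i j → arc j i
  line_irrefl : ∀ i, ¬ line i i
  arrow_irrefl : ∀ i, ¬ arrow i i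
  arc_irrefl : ∀ i, ¬ arc i i

namespace MixedGraph

variable {V : Type*}

/-- `i` and `j` are adjacent (joined by some edge). -/
def adj (G : MixedGraph V) (i j : V) : Prop :=
  G.line i j ∨ G.arrow i j ∨ G.arrow j i ∨ G.arc i j

/-- There is an edge between `i` and `j` with an arrowhead pointing at `j`. -/
def headAt (G : MixedGraph V) (i j : V) : Prop :=
  G.arrow i j ∨ G.arc i j

/-- `j` is a collider on the V-configuration `⟨i, j, k⟩`. -/
def collider (G : MixedGraph V) (i j k : V) : Prop :=
  G.headAt i j ∧ G.headAt k j

/-- `i` is an ancestor of `j` (a direction-preserving path of arrows from `i` to `j`). -/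
def anc (G : MixedGraph V) (i j : V) : Prop :=
  Relation.ReflTransGen G.arrow i j

/-- A path: a list of pairwise distinct nodes, consecutive ones adjacent. -/
def isPath (G : MixedGraph V) (p : List V) : Prop :=
  p.Nodup ∧ List.Chain' G.adj p

/-- Inner-node condition for an `m`-connecting path given `C`:
every collider inner node is in `C` or an ancestor of a node of `C`,
every non-collider inner node is outside `C`. -/
def innerOK (G : MixedGraph V) (C : Set V) : List V → Prop
  | a :: b :: c :: rest =>
      ((G.collider a b c → b ∈ C ∨ ∃ x ∈ C, G.anc b x) ∧
        (¬ G.collider a b c → b ∉ C)) ∧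
      innerOK G C (b :: c :: rest)
  | _ => True

/-- `p` is an `m`-connecting path between `i` and `j` given `C`. -/
def mConnecting (G : MixedGraph V) (C : Set V) (i j : V) (p : List V) : Prop :=
  G.isPath p ∧ 2 ≤ p.length ∧ p.head? = some i ∧ p.getLast? = some j ∧
    G.innerOK C p

/-- `A` is `m`-separated from `B` given `C`. -/
def mSep (G : MixedGraph V) (A B C : Set V) : Prop :=
  ¬ ∃ (i j : V) (p : List V), i ∈ A ∧ j ∈ B ∧ G.mConnecting C i j p

/-- Two mixed graphs on the same node set are Markov equivalent if they induce
exactly the same `m`-separation statements among disjoint sets. -/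
def markovEquiv (G₁ G₂ : MixedGraph V) : Prop :=
  ∀ A B C : Set V, Disjoint A B → Disjoint A C → Disjoint B C →
    (G₁.mSep A B C ↔ G₂.mSep A B C)

/-- An undirected graph: only line edges. -/
def isUG (G : MixedGraph V) : Prop :=
  (∀ i j, ¬ G.arrow i j) ∧ (∀ i j, ¬ G.arc i j)

/-- A bidirected graph: only arc edges. -/
def isBG (G : MixedGraph V) : Prop :=
  (∀ i j, ¬ G.arrow i j) ∧ (∀ i j, ¬ G.line i j)

/-- A directed acyclic graph: only arrows, and no directed cycle. -/
def isDAG (G : MixedGraph V) : Prop :=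
  (∀ i j, ¬ G.line i j) ∧ (∀ i j, ¬ G.arc i j) ∧ ∀ i, ¬ Relation.TransGen G.arrow i i

/-- An ancestral graph: no node is an ancestor of one of its parents or spouses,
and no arrowhead points at a node having a neighbour. -/
def isAncestral (G : MixedGraph V) : Prop :=
  (∀ i j, (G.arrow j i ∨ G.arc j i) → ¬ G.anc i j) ∧
  (∀ i j k, G.line i j → ¬ G.headAt k i)

/-- Maximality: every pair of distinct non-adjacent nodes can be `m`-separated. -/
def isMaximal (G : MixedGraph V) : Prop :=
  ∀ i j, i ≠ j → ¬ G.adj i j → ∃ C : Set V, i ∉ C ∧ j ∉ C ∧ G.mSep {i} {j} C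

/-- A maximal ancestral graph. -/
def isMAG (G : MixedGraph V) : Prop :=
  G.isAncestral ∧ G.isMaximal

/-- Two graphs have the same skeleton. -/
def sameSkeleton (G₁ G₂ : MixedGraph V) : Prop :=
  ∀ i j, G₁.adj i j ↔ G₂.adj i j

/-- An unshielded collider V-configuration `⟨i, j, k⟩`. -/
def unshieldedCollider (G : MixedGraph V) (i j k : V) : Prop :=
  G.collider i j k ∧ i ≠ k ∧ ¬ G.adj i k

end MixedGraph

/-!
If `H` is Markov equivalent to an undirected graph `U` and `⟨i, j, k⟩` is an unshielded
collider, maximality gives a set `C` m-separating `i` and `k` in `H`, hence in `U`. In an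
undirected graph separation survives enlarging `C`, so `insert j C` separates them in `U`, hence
in `H`, although the collider path `i, j, k` m-connects them given `insert j C`.

Conversely, without unshielded colliders `H` is Markov equivalent to its skeleton. A path of the
skeleton avoiding `C` can be shortened along chords until it has none; then all its triples are
unshielded, hence non-colliders of `H`. An m-connecting path of `H` can be shortened by bypassing
each maximal run of nodes of `C`: such a run consists of colliders, and in a maximal graph without
unshielded colliders the endpoints of a collider path are adjacent.
-/

theorem List.triple_infix_append_cons_cons {α : Type*} {x y z a w : α} {l r : List α}
    (h : [x, y, z] <:+: l ++ a :: w :: r) :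
    [x, y, z] <:+: l ++ [a] ∨ [x, y, z] <:+: w :: r ∨
      (y = a ∧ z = w ∧ ∃ l', l = l' ++ [x]) ∨ (x = a ∧ y = w ∧ ∃ r', r = z :: r') := by
  rw [show l ++ a :: w :: r = (l ++ [a]) ++ w :: r by simp,
    List.infix_append_iff_ne_nil] at h
  rcases h with h | h | ⟨l₁, l₂, h₁, h₂, he, ⟨s, hs⟩, ⟨t, ht⟩⟩
  · exact Or.inl h
  · exact Or.inr (Or.inl h)
  right; right
  simp only [List.cons_eq_append_iff, List.nil_eq_append_iff] at he
  rcases he with ⟨rfl, -⟩ | ⟨_, rfl, ⟨rfl, rfl⟩ | ⟨_, rfl, ⟨rfl, rfl⟩ | ⟨_, rfl, -, rfl⟩⟩⟩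
  · exact absurd rfl h₁
  · obtain ⟨-, hxa⟩ := List.append_inj' hs rfl
    simp only [List.cons_append, List.nil_append, List.cons.injEq] at ht hxa
    exact Or.inr ⟨hxa.1, ht.1, t, ht.2.symm⟩
  · have hs' : (s ++ [x]) ++ [y] = l ++ [a] := by simpa using hs
    obtain ⟨hl, hya⟩ := List.append_inj' hs' rfl
    simp only [List.cons_append, List.nil_append, List.cons.injEq] at ht hya
    exact Or.inl ⟨hya.1, ht.1, s, hl.symm⟩
  · exact absurd rfl h₂

theorem List.IsInfix.of_cons_cons {α : Type*} {a b : α} {l₁ l₂ : List α}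
    (h : a :: l₁ <:+: b :: l₂) : l₁ <:+: l₂ := by
  rcases List.infix_cons_iff.1 h with h | h
  · exact (List.cons_prefix_cons.1 h).2.isInfix
  · exact (List.suffix_cons a l₁).isInfix.trans h

theorem List.mem_of_triple_infix {α : Type*} {x y z a w : α} {l : List α}
    (h : [x, y, z] <:+: a :: (l ++ [w])) : y ∈ l := by
  have h₁ : [z, y] <:+: w :: l.reverse := by simpa using List.reverse_infix.2 h.of_cons_cons
  exact List.mem_reverse.1 (h₁.of_cons_cons.subset (List.mem_singleton_self y))

theorem List.exists_eq_run_append {α : Type*} {P : α → Prop} {y : α} {t : List α} (hy : P y)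
    (hlast : ∀ z ∈ (y :: t).getLast?, ¬ P z) :
    ∃ run w r, y :: t = run ++ w :: r ∧ run ≠ [] ∧ (∀ u ∈ run, P u) ∧ ¬ P w := by
  induction t generalizing y with
  | nil => exact absurd hy (hlast y rfl)
  | cons y' t ih =>
    by_cases hy' : P y'
    · obtain ⟨run, w, r, he, -, hrun, hw⟩ := ih hy' (by simpa [List.getLast?_cons_cons] using hlast)
      refine ⟨y :: run, w, r, by rw [he]; rfl, List.cons_ne_nil _ _, ?_, hw⟩
      simpa [hy] using hrun
    · exact ⟨[y], y', t, rfl, List.cons_ne_nil _ _, by simpa using hy, hy'⟩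

theorem List.exists_eq_append_run {α : Type*} {P : α → Prop} {x : α} {t : List α} (hx : ¬ P x)
    (hlast : ∀ z ∈ (x :: t).getLast?, ¬ P z) (hP : ∃ b ∈ x :: t, P b) :
    ∃ l a run w r, x :: t = l ++ a :: (run ++ w :: r) ∧ run ≠ [] ∧ (∀ u ∈ run, P u) ∧
      ¬ P a ∧ ¬ P w := by
  induction t generalizing x with
  | nil => simp_all
  | cons y t ih =>
    have hlast' : ∀ z ∈ (y :: t).getLast?, ¬ P z := by simpa [List.getLast?_cons_cons] using hlast
    by_cases hy : P y
    · obtain ⟨run, w, r, he, hrun⟩ := List.exists_eq_run_append hy hlast'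
      exact ⟨[], x, run, w, r, by rw [he]; rfl, hrun.1, hrun.2.1, hx, hrun.2.2⟩
    · obtain ⟨b, hb, hPb⟩ := hP
      have hb' : b ∈ y :: t := (List.mem_cons.1 hb).resolve_left fun he => hx (he ▸ hPb)
      obtain ⟨l, a, run, w, r, he, h⟩ := ih hy hlast' ⟨b, hb', hPb⟩
      exact ⟨x :: l, a, run, w, r, by rw [he]; rfl, h⟩

namespace MixedGraph

variable {V : Type*} {G H U : MixedGraph V} {A B C D : Set V} {i j k a b c w : V}
  {p q l r run : List V}

theorem adj_symm (h : G.adj i j) : G.adj j i := by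
  rcases h with h | h | h | h
  exacts [Or.inl (G.line_symm _ _ h), Or.inr (Or.inr (Or.inl h)), Or.inr (Or.inl h),
    Or.inr (Or.inr (Or.inr (G.arc_symm _ _ h)))]

theorem adj_irrefl (i : V) : ¬ G.adj i i := by
  rintro (h | h | h | h)
  exacts [G.line_irrefl _ h, G.arrow_irrefl _ h, G.arrow_irrefl _ h, G.arc_irrefl _ h]

theorem adj.ne (h : G.adj i j) : i ≠ j := by
  rintro rfl
  exact adj_irrefl _ h

theorem headAt.adj (h : G.headAt i j) : G.adj i j :=
  h.elim (fun h => Or.inr (Or.inl h)) (fun h => Or.inr (Or.inr (Or.inr h)))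

theorem collider.symm (h : G.collider a b c) : G.collider c b a := ⟨h.2, h.1⟩

def tripleOK (G : MixedGraph V) (C : Set V) (a b c : V) : Prop :=
  (G.collider a b c → b ∈ C ∨ ∃ x ∈ C, G.anc b x) ∧ (¬ G.collider a b c → b ∉ C)

theorem tripleOK.symm (h : G.tripleOK C a b c) : G.tripleOK C c b a :=
  ⟨fun hc => h.1 hc.symm, fun hc => h.2 fun hc' => hc hc'.symm⟩

/-- Either `a → u` makes `a` an ancestor of `C`, or `a ↔ u` makes `⟨z, a, u⟩` a collider
whenever `⟨z, a, w⟩` is one. -/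
theorem tripleOK.of_headAt {z u w : V} (h : G.tripleOK C z a u) (hau : G.headAt a u)
    (hu : u ∈ C) (ha : a ∉ C) : G.tripleOK C z a w := by
  refine ⟨fun hc => ?_, fun _ => ha⟩
  rcases hau with harr | harc
  · exact Or.inr ⟨u, hu, .single harr⟩
  · exact h.1 ⟨hc.1, Or.inr (G.arc_symm _ _ harc)⟩

theorem innerOK_iff_infix :
    ∀ p : List V, G.innerOK C p ↔ ∀ a b c, [a, b, c] <:+: p → G.tripleOK C a b c
  | a :: b :: c :: rest => by
    rw [innerOK, innerOK_iff_infix (b :: c :: rest)]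
    simp only [List.infix_cons_iff (l₂ := b :: c :: rest), List.cons_prefix_cons,
      List.nil_prefix, and_true, or_imp, forall_and]
    simp only [and_imp]
    exact and_congr_left' ⟨by rintro h _ _ _ rfl rfl rfl; exact h, fun h => h a b c rfl rfl rfl⟩
  | [] | [_] | [_, _] => by
    simp only [innerOK, true_iff]
    intro _ _ _ h
    simpa using h.length_le

theorem mConnecting.tripleOK (h : G.mConnecting C i j p) (ht : [a, b, c] <:+: p) :
    G.tripleOK C a b c :=
  (innerOK_iff_infix p).1 h.2.2.2.2 a b c ht

theorem mConnecting.collider (h : G.mConnecting C i j p) (ht : [a, b, c] <:+: p) (hb : b ∈ C) :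
    G.collider a b c :=
  not_not.1 fun hc => (h.tripleOK ht).2 hc hb

theorem mConnecting.transfer {G' : MixedGraph V} {C' : Set V} (h : G.mConnecting C i j p)
    (hpath : G'.isPath p)
    (ht : ∀ a b c, [a, b, c] <:+: p → G.tripleOK C a b c → G'.tripleOK C' a b c) :
    G'.mConnecting C' i j p :=
  ⟨hpath, h.2.1, h.2.2.1, h.2.2.2.1,
    (innerOK_iff_infix p).2 fun a b c hi => ht a b c hi (h.tripleOK hi)⟩

theorem mConnecting_triple (hab : G.adj a b) (hbc : G.adj b c) (hac : a ≠ c)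
    (h : G.tripleOK C a b c) : G.mConnecting C a c [a, b, c] :=
  ⟨⟨by simp [hab.ne, hbc.ne, hac], List.isChain_cons_cons.2 ⟨hab, List.isChain_pair.2 hbc⟩⟩,
    by simp, rfl, rfl, h, trivial⟩

theorem mConnecting.splice {m : List V}
    (h : G.mConnecting C i j (l ++ a :: (m ++ w :: r))) (haw : G.adj a w)
    (hl : ∀ z l', l = l' ++ [z] → G.tripleOK C z a w)
    (hr : ∀ y r', r = y :: r' → G.tripleOK C a w y) :
    G.mConnecting C i j (l ++ a :: w :: r) := by
  obtain ⟨⟨hnd, hch⟩, -, hhead, hlast, hin⟩ := h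
  have hpre : l ++ [a] <:+: l ++ a :: (m ++ w :: r) := by
    simpa using List.infix_append_left (l₁ := l ++ [a]) (l₂ := m ++ w :: r)
  have hsuf : w :: r <:+: l ++ a :: (m ++ w :: r) := by
    simpa using List.infix_append_right (l₁ := l ++ a :: m) (l₂ := w :: r)
  refine ⟨⟨hnd.sublist (((List.sublist_append_right m _).cons_cons a).append_left l), ?_⟩,
    by simp only [List.length_append, List.length_cons]; omega, ?_, ?_, ?_⟩
  · rw [show l ++ a :: w :: r = (l ++ [a]) ++ w :: r by simp, List.Chain', List.isChain_append]
    exact ⟨hch.infix hpre, hch.infix hsuf, by simpa using haw⟩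
  · cases l <;> simpa using hhead
  · simpa [List.getLast?_cons, List.getLast?_append] using hlast
  · rw [innerOK_iff_infix] at hin ⊢
    intro x y z ht
    rcases List.triple_infix_append_cons_cons ht with
      ht | ht | ⟨rfl, rfl, l', rfl⟩ | ⟨rfl, rfl, r', rfl⟩
    exacts [hin _ _ _ (ht.trans hpre), hin _ _ _ (ht.trans hsuf), hl _ _ rfl, hr _ _ rfl]

theorem isPath.infix (h : G.isPath p) (hq : q <:+: p) : G.isPath q :=
  ⟨h.1.sublist hq.sublist, h.2.infix hq⟩

theorem mConnecting.reverse (h : G.mConnecting C i j p) : G.mConnecting C j i p.reverse := by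
  obtain ⟨⟨hnd, hch⟩, hlen, hhead, hlast, hin⟩ := h
  refine ⟨⟨List.nodup_reverse.2 hnd, ?_⟩, by simpa using hlen, by simpa using hlast,
    by simpa using hhead, ?_⟩
  · rw [List.Chain', List.isChain_reverse]
    exact hch.imp fun _ _ => adj_symm
  · rw [innerOK_iff_infix] at hin ⊢
    exact fun a b c ht => (hin c b a (List.reverse_infix.1 (by simpa using ht))).symm

def colliderPath (G : MixedGraph V) (p : List V) : Prop :=
  G.isPath p ∧ ∀ a b c, [a, b, c] <:+: p → G.collider a b c

theorem colliderPath.infix (h : G.colliderPath p) (hq : q <:+: p) : G.colliderPath q :=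
  ⟨h.1.infix hq, fun a b c ht => h.2 a b c (ht.trans hq)⟩

/-- Otherwise maximality gives a set `Cs` separating `x` and `y`. It cannot contain all inner
nodes, or the collider path would m-connect `x` and `y` given `Cs`; and an inner node `b ∉ Cs`
m-connects them through `⟨x, b, y⟩`, which is not a collider as it would be unshielded. -/
theorem adj_of_colliderPath (hmax : G.isMaximal)
    (hnuc : ¬ ∃ i j k, G.unshieldedCollider i j k) (l : List V) (x y : V)
    (h : G.colliderPath (x :: (l ++ [y]))) : G.adj x y := by
  obtain rfl | - := eq_or_ne l []
  · exact List.rel_of_isChain_cons_cons h.1.2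
  by_contra hxy
  have hxy' : x ≠ y := fun he => (List.nodup_cons.1 h.1.1).1 (by simp [he])
  obtain ⟨Cs, hx, hy, hsep⟩ := hmax x y hxy' hxy
  apply hsep
  by_cases hall : ∀ a b c, [a, b, c] <:+: x :: (l ++ [y]) → b ∈ Cs
  · refine ⟨x, y, x :: (l ++ [y]), rfl, rfl, h.1, by simp, rfl,
    by rw [← List.cons_append, List.getLast?_concat], (innerOK_iff_infix _).2 ?_⟩
    exact fun a b c ht => ⟨fun _ => Or.inl (hall a b c ht), fun hc => absurd (h.2 a b c ht) hc⟩
  push Not at hall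
  obtain ⟨a, b, c, ht, hb⟩ := hall
  obtain ⟨l₁, l₂, rfl⟩ := List.append_of_mem (List.mem_of_triple_infix ht)
  have hxb := adj_of_colliderPath hmax hnuc l₁ x b (h.infix ⟨[], l₂ ++ [y], by simp⟩)
  have hby := adj_of_colliderPath hmax hnuc l₂ b y (h.infix ⟨x :: l₁, [], by simp⟩)
  exact ⟨x, y, [x, b, y], rfl, rfl, mConnecting_triple hxb hby hxy'
    ⟨fun hc => absurd ⟨x, b, y, hc, hxy', hxy⟩ hnuc, fun _ => hb⟩⟩
termination_by l.length
decreasing_by all_goals subst_vars; simp only [List.length_append, List.length_cons]; omega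

theorem mConnecting.tripleOK_before_run {z : V}
    (h : G.mConnecting C i j (l ++ z :: a :: (run ++ w :: r))) (hrun : run ≠ [])
    (hC : ∀ u ∈ run, u ∈ C) (ha : a ∉ C) (x : V) : G.tripleOK C z a x := by
  obtain ⟨u, run', rfl⟩ := List.exists_cons_of_ne_nil hrun
  obtain ⟨v, rest, hv⟩ := List.exists_cons_of_ne_nil (List.append_ne_nil_of_right_ne_nil run'
    (List.cons_ne_nil w r))
  have hu : u ∈ C := hC u List.mem_cons_self
  rw [show l ++ z :: a :: (u :: run' ++ w :: r) = l ++ [z, a, u, v] ++ rest by simp [hv]] at h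
  have hzau : [z, a, u] <:+: l ++ [z, a, u, v] ++ rest := ⟨l, v :: rest, by simp⟩
  have hauv : [a, u, v] <:+: l ++ [z, a, u, v] ++ rest := ⟨l ++ [z], rest, by simp⟩
  exact (h.tripleOK hzau).of_headAt (h.collider hauv hu).1 hu ha

theorem mConnecting.bypass_run (hmax : G.isMaximal)
    (hnuc : ¬ ∃ i j k, G.unshieldedCollider i j k)
    (h : G.mConnecting C i j (l ++ a :: (run ++ w :: r))) (hrun : run ≠ [])
    (hC : ∀ u ∈ run, u ∈ C) (ha : a ∉ C) (hw : w ∉ C) :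
    G.mConnecting C i j (l ++ a :: w :: r) := by
  have hseg : a :: (run ++ [w]) <:+: l ++ a :: (run ++ w :: r) := ⟨l, r, by simp⟩
  have hcol : G.colliderPath (a :: (run ++ [w])) :=
    ⟨h.1.infix hseg, fun _ y _ ht =>
      h.collider (ht.trans hseg) (hC y (List.mem_of_triple_infix ht))⟩
  refine h.splice (adj_of_colliderPath hmax hnuc run a w hcol) ?_ ?_
  · rintro z l' rfl
    have h' : G.mConnecting C i j (l' ++ z :: a :: (run ++ w :: r)) := by simpa using h
    exact h'.tripleOK_before_run hrun hC ha w
  · rintro y r' rfl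
    have hrev : G.mConnecting C j i (r'.reverse ++ y :: w :: (run.reverse ++ a :: l.reverse)) := by
      simpa using h.reverse
    exact (hrev.tripleOK_before_run (by simpa using hrun) (by simpa using hC) hw a).symm

theorem isUG.not_collider (hG : G.isUG) : ¬ G.collider a b c := by
  rintro ⟨h | h, -⟩
  exacts [hG.1 _ _ h, hG.2 _ _ h]

theorem isUG.tripleOK_iff (hG : G.isUG) : G.tripleOK C a b c ↔ b ∉ C :=
  ⟨fun h => h.2 hG.not_collider, fun h => ⟨fun hc => absurd hc hG.not_collider, fun _ => h⟩⟩

theorem isUG.mSep_mono (hG : G.isUG) (h : G.mSep A B C) (hCD : C ⊆ D) : G.mSep A B D := by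
  rintro ⟨i, j, p, hi, hj, hp⟩
  refine h ⟨i, j, p, hi, hj, hp.transfer hp.1 fun _ _ _ _ hD => ?_⟩
  exact hG.tripleOK_iff.2 fun hb => hG.tripleOK_iff.1 hD (hCD hb)

def skeleton (G : MixedGraph V) : MixedGraph V where
  line := G.adj
  arrow _ _ := False
  arc _ _ := False
  line_symm _ _ := adj_symm
  arc_symm _ _ h := h
  line_irrefl := adj_irrefl
  arrow_irrefl _ h := h
  arc_irrefl _ h := h

theorem skeleton_isUG : G.skeleton.isUG := ⟨fun _ _ h => h, fun _ _ h => h⟩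

theorem skeleton_adj : G.skeleton.adj = G.adj := by
  funext i j
  exact propext ⟨fun h => h.elim id fun h => by simp [skeleton] at h, Or.inl⟩

theorem isPath_skeleton : G.skeleton.isPath p ↔ G.isPath p := by
  rw [isPath, isPath, skeleton_adj]

theorem mConnecting.skeleton (h : G.mConnecting C i j p) (hC : ∀ b ∈ p, b ∉ C) :
    G.skeleton.mConnecting C i j p :=
  h.transfer (isPath_skeleton.2 h.1) fun _ b _ ht _ =>
    skeleton_isUG.tripleOK_iff.2 (hC b (ht.subset (by simp)))

theorem mConnecting.of_skeleton (hnuc : ¬ ∃ i j k, G.unshieldedCollider i j k)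
    (h : G.skeleton.mConnecting C i j p) (hchordless : ∀ u v z, [u, v, z] <:+: p → ¬ G.adj u z) :
    G.mConnecting C i j p := by
  refine h.transfer (isPath_skeleton.1 h.1) fun u v z ht hvz => ?_
  have huz : u ≠ z := fun he => (List.nodup_cons.1 (h.1.1.sublist ht.sublist)).1 (by simp [he])
  exact ⟨fun hc => absurd ⟨u, v, z, hc, huz, hchordless u v z ht⟩ hnuc,
    fun _ => skeleton_isUG.tripleOK_iff.1 hvz⟩

theorem exists_mConnecting_of_skeleton (hnuc : ¬ ∃ i j k, G.unshieldedCollider i j k)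
    (p : List V) (hp : G.skeleton.mConnecting C i j p) : ∃ q, G.mConnecting C i j q := by
  by_cases hchord : ∃ u v z, [u, v, z] <:+: p ∧ G.adj u z
  · obtain ⟨u, v, z, ⟨l, r, rfl⟩, huz⟩ := hchord
    rw [show l ++ [u, v, z] ++ r = l ++ u :: ([v] ++ z :: r) by simp] at hp
    refine exists_mConnecting_of_skeleton hnuc _ (hp.splice (by rwa [skeleton_adj]) ?_ ?_)
    · rintro x l' rfl
      have hxuv : [x, u, v] <:+: (l' ++ [x]) ++ u :: ([v] ++ z :: r) := ⟨l', z :: r, by simp⟩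
      exact skeleton_isUG.tripleOK_iff.2 (skeleton_isUG.tripleOK_iff.1 (hp.tripleOK hxuv))
    · rintro y r' rfl
      have hvzy : [v, z, y] <:+: l ++ u :: ([v] ++ z :: y :: r') := ⟨l ++ [u], r', by simp⟩
      exact skeleton_isUG.tripleOK_iff.2 (skeleton_isUG.tripleOK_iff.1 (hp.tripleOK hvzy))
  · push Not at hchord
    exact ⟨p, hp.of_skeleton hnuc hchord⟩
termination_by p.length
decreasing_by subst_vars; simp

theorem exists_skeleton_mConnecting (hmax : G.isMaximal)
    (hnuc : ¬ ∃ i j k, G.unshieldedCollider i j k) (hi : i ∉ C) (hj : j ∉ C)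
    (p : List V) (hp : G.mConnecting C i j p) : ∃ q, G.skeleton.mConnecting C i j q := by
  by_cases hC : ∃ b ∈ p, b ∈ C
  · obtain ⟨t, rfl⟩ := List.head?_eq_some_iff.1 hp.2.2.1
    have hlast : ∀ z ∈ (i :: t).getLast?, z ∉ C := by
      rintro z hz
      rw [hp.2.2.2.1, Option.mem_some_iff] at hz
      exact hz ▸ hj
    obtain ⟨l, a, run, w, r, he, hrun, hrunC, ha, hw⟩ := List.exists_eq_append_run hi hlast hC
    rw [he] at hp
    exact exists_skeleton_mConnecting hmax hnuc hi hj _ (hp.bypass_run hmax hnuc hrun hrunC ha hw)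
  · push Not at hC
    exact ⟨p, hp.skeleton hC⟩
termination_by p.length
decreasing_by
  subst_vars
  simp only [he, List.length_append, List.length_cons]
  have := List.length_pos_of_ne_nil hrun
  omega

theorem markovEquiv_of_exists_mConnecting_iff {G₁ G₂ : MixedGraph V}
    (h : ∀ C i j, i ∉ C → j ∉ C → ((∃ p, G₁.mConnecting C i j p) ↔ ∃ p, G₂.mConnecting C i j p)) :
    G₁.markovEquiv G₂ := by
  intro A B C _ hAC hBC
  refine not_congr ⟨fun ⟨i, j, p, hi, hj, hp⟩ => ?_, fun ⟨i, j, p, hi, hj, hp⟩ => ?_⟩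
  · obtain ⟨q, hq⟩ := (h C i j (Set.disjoint_left.1 hAC hi) (Set.disjoint_left.1 hBC hj)).1 ⟨p, hp⟩
    exact ⟨i, j, q, hi, hj, hq⟩
  · obtain ⟨q, hq⟩ := (h C i j (Set.disjoint_left.1 hAC hi) (Set.disjoint_left.1 hBC hj)).2 ⟨p, hp⟩
    exact ⟨i, j, q, hi, hj, hq⟩

theorem markovEquiv_skeleton (hmax : G.isMaximal) (hnuc : ¬ ∃ i j k, G.unshieldedCollider i j k) :
    G.markovEquiv G.skeleton :=
  markovEquiv_of_exists_mConnecting_iff fun _ _ _ hi hj =>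
    ⟨fun ⟨p, hp⟩ => exists_skeleton_mConnecting hmax hnuc hi hj p hp,
      fun ⟨p, hp⟩ => exists_mConnecting_of_skeleton hnuc p hp⟩

theorem markovEquiv.mSep_singleton_iff (h : G.markovEquiv H) (hik : i ≠ k) (hi : i ∉ C)
    (hk : k ∉ C) : G.mSep {i} {k} C ↔ H.mSep {i} {k} C :=
  h _ _ _ (Set.disjoint_singleton.2 hik) (Set.disjoint_singleton_left.2 hi)
    (Set.disjoint_singleton_left.2 hk)

theorem not_exists_unshieldedCollider_of_markovEquiv (hmax : H.isMaximal) (hU : U.isUG)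
    (hHU : H.markovEquiv U) : ¬ ∃ i j k, H.unshieldedCollider i j k := by
  rintro ⟨i, j, k, hcol, hik, hadj⟩
  obtain ⟨C, hi, hk, hsep⟩ := hmax i k hik hadj
  have hi' : i ∉ insert j C := by simp [hi, hcol.1.adj.ne]
  have hk' : k ∉ insert j C := by simp [hk, hcol.2.adj.ne]
  have hsep' : H.mSep {i} {k} (insert j C) := (hHU.mSep_singleton_iff hik hi' hk').2
    (hU.mSep_mono ((hHU.mSep_singleton_iff hik hi hk).1 hsep) (Set.subset_insert j C))
  exact hsep' ⟨i, k, [i, j, k], rfl, rfl, mConnecting_triple hcol.1.adj (adj_symm hcol.2.adj) hik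
    ⟨fun _ => Or.inl (Set.mem_insert j C), fun h => absurd hcol h⟩⟩

end MixedGraph

theorem mag_equiv_some_ug_iff_general {V : Type*} (H : MixedGraph V)
    (hH : H.isMAG) :
    (∃ U : MixedGraph V, U.isUG ∧ H.markovEquiv U) ↔
      ¬ ∃ i j k, H.unshieldedCollider i j k :=
  ⟨fun ⟨_, hU, hHU⟩ => MixedGraph.not_exists_unshieldedCollider_of_markovEquiv hH.2 hU hHU,
    fun hnuc => ⟨H.skeleton, MixedGraph.skeleton_isUG, MixedGraph.markovEquiv_skeleton hH.2 hnuc⟩⟩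

/-- A maximal ancestral graph is Markov equivalent to some undirected graph
iff it contains no unshielded collider V-configuration. -/
theorem mag_equiv_some_ug_iff {V : Type*} [Fintype V] (H : MixedGraph V)
    (hH : H.isMAG) :
    (∃ U : MixedGraph V, U.isUG ∧ H.markovEquiv U) ↔
      ¬ ∃ i j k, H.unshieldedCollider i j k :=
  mag_equiv_some_ug_iff_general H hH
end

section
/- A maximal ancestral graph H is Markov equivalent to some bidirected graph if and only if H contains no unshielded non-collider V-configuration. -/
namespace MixedGraph
variable {V : Type*}

/-- An unshielded non-collider V-configuration `⟨i, j, k⟩`. -/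
def unshieldedNonCollider (G : MixedGraph V) (i j k : V) : Prop :=
  G.adj i j ∧ G.adj j k ∧ i ≠ k ∧ ¬ G.adj i k ∧ ¬ G.collider i j k

end MixedGraph

/-!
In an ancestral graph without unshielded non-colliders, a tail at `b` on an edge `b – c` forces
every other neighbour of `b` to be adjacent to `c` (otherwise `b` would be an unshielded
non-collider). Hence tails compose, an ancestor is joined to its descendant by an edge with a tail
at the ancestor, and the closed neighbourhood of `b` is contained in that of `c`.

Every inner node of an m-connecting path given `C` that is not in `C` has a tail towards a
neighbour on the path or towards a node of `C`. Walking along the path, one keeps a node `w`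
reachable from the start by skeleton steps into `C` whose closed neighbourhood swallows the
current node; at the end, the last node is adjacent to such a `w`. Conversely, a shortest skeleton
walk through `C` has no shortcuts, so each of its inner nodes is an unshielded collider in `C`,
and the walk is m-connecting. So m-separation in such a graph only depends on its skeleton.

The bidirected graph on the skeleton of `H` is of this kind. Conversely, if `H` is equivalent to a
bidirected graph `B` and `i – j – k` is an unshielded non-collider of `H`, then `i` and `k` are
m-connected given `∅`, which in `B` forces them to be adjacent; but maximality of `H` separates them.
-/

namespace List

variable {α : Type*} {R : α → α → Prop}

theorem two_le_length_of_head?_of_getLast? {l : List α} {a b : α} (ha : l.head? = some a)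
    (hb : l.getLast? = some b) (hab : a ≠ b) : 2 ≤ l.length := by
  match l with
  | [] => simp at ha
  | [c] =>
    simp only [head?_cons, getLast?_singleton, Option.some.injEq] at ha hb
    exact absurd (ha.symm.trans hb) hab
  | _ :: _ :: _ => simp

theorem ne_of_infix_of_head? {l : List α} {a x y : α} (hl : l.Nodup) (ha : l.head? = some a)
    (h : [x, y] <:+: l) : y ≠ a := by
  rintro rfl
  obtain ⟨s, t, rfl⟩ := h
  cases s <;> simp_all

theorem ne_of_infix_of_getLast? {l : List α} {a y z : α} (hl : l.Nodup)
    (ha : l.getLast? = some a) (h : [y, z] <:+: l) : y ≠ a :=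
  ne_of_infix_of_head? (nodup_reverse.mpr hl) (by rwa [head?_reverse])
    (by simpa using reverse_infix.mpr h)

def IsShortening (R : α → α → Prop) (l' l : List α) : Prop :=
  l' <+ l ∧ l'.length < l.length ∧ l'.head? = l.head? ∧ l'.getLast? = l.getLast? ∧ l'.IsChain R

theorem IsChain.exists_isShortening_of_not_nodup :
    ∀ {l : List α}, l.IsChain R → ¬ l.Nodup → ∃ l', IsShortening R l' l
  | [], _, hnd => absurd nodup_nil hnd
  | a :: t, hl, hnd => by
    by_cases ha : a ∈ t
    · obtain ⟨s, u, rfl⟩ := append_of_mem ha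
      have hsuf : a :: u <:+ a :: (s ++ a :: u) := suffix_append (a :: s) (a :: u)
      exact ⟨a :: u, hsuf.sublist, by simp, rfl, by simp [getLast?_cons], hl.suffix hsuf⟩
    · obtain ⟨t', hsub, hlen, hh, hlast, hc⟩ :=
        hl.tail.exists_isShortening_of_not_nodup fun h => hnd (nodup_cons.mpr ⟨ha, h⟩)
      refine ⟨a :: t', hsub.cons_cons a, by simpa using hlen, rfl,
        by simp [getLast?_cons, hlast], List.isChain_cons.mpr ⟨?_, hc⟩⟩
      rw [hh]
      exact hl.rel_head?

theorem IsChain.exists_isShortening_of_infix {l : List α} {x y z : α} (hl : l.IsChain R)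
    (h : [x, y, z] <:+: l) (hxz : R x z) : ∃ l', IsShortening R l' l := by
  obtain ⟨s, t, rfl⟩ := h
  refine ⟨s ++ x :: z :: t, by simp, by simp, by simp [head?_append],
    by simp [getLast?_cons], ?_⟩
  simp only [append_assoc, cons_append, nil_append, isChain_append_cons_cons,
    isChain_cons_cons] at hl ⊢
  exact ⟨hl.1, hxz, hl.2.2.2⟩

theorem IsChain.exists_shortcutFree_sublist {l : List α} (hl : l.IsChain R) :
    ∃ p, p <+ l ∧ p.head? = l.head? ∧ p.getLast? = l.getLast? ∧ p.IsChain R ∧ p.Nodup ∧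
      ∀ x y z, [x, y, z] <:+: p → ¬ R x z := by
  by_cases hfree : l.Nodup ∧ ∀ x y z, [x, y, z] <:+: l → ¬ R x z
  · exact ⟨l, .refl l, rfl, rfl, hl, hfree⟩
  obtain ⟨l', hsub, hlen, hh, hlast, hc⟩ : ∃ l', IsShortening R l' l := by
    rcases not_and_or.mp hfree with hnd | hsc
    · exact hl.exists_isShortening_of_not_nodup hnd
    · push Not at hsc
      obtain ⟨x, y, z, h, hxz⟩ := hsc
      exact hl.exists_isShortening_of_infix h hxz
  obtain ⟨p, hp, hph, hpl, hpc, hpfree⟩ := hc.exists_shortcutFree_sublist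
  exact ⟨p, hp.trans hsub, hph.trans hh, hpl.trans hlast, hpc, hpfree⟩
termination_by l.length

end List

namespace MixedGraph

open Relation

variable {V : Type*} {G : MixedGraph V} {C : Set V} {i j : V}

lemma adj_symm_s8 {a b : V} (h : G.adj a b) : G.adj b a := by
  rcases h with h | h | h | h
  · exact Or.inl (G.line_symm _ _ h)
  · exact Or.inr (Or.inr (Or.inl h))
  · exact Or.inr (Or.inl h)
  · exact Or.inr (Or.inr (Or.inr (G.arc_symm _ _ h)))

lemma ne_of_adj {a b : V} (h : G.adj a b) : a ≠ b := by
  rintro rfl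
  rcases h with h | h | h | h
  exacts [G.line_irrefl _ h, G.arrow_irrefl _ h, G.arrow_irrefl _ h, G.arc_irrefl _ h]

lemma reflGen_adj_symm {a b : V} (h : ReflGen G.adj a b) : ReflGen G.adj b a := by
  cases h with
  | refl => exact .refl
  | single h => exact .single (adj_symm_s8 h)

lemma mConnecting_pair (h : G.adj i j) : G.mConnecting C i j [i, j] :=
  ⟨⟨by simp [ne_of_adj h], List.isChain_pair.mpr h⟩, le_rfl, rfl, rfl, trivial⟩

lemma unshieldedNonCollider.mConnecting {k : V} (h : G.unshieldedNonCollider i j k)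
    (hj : j ∉ C) : G.mConnecting C i k [i, j, k] := by
  obtain ⟨hij, hjk, hik, -, hnc⟩ := h
  refine ⟨⟨by simp [ne_of_adj hij, ne_of_adj hjk, hik], ?_⟩, by simp, rfl, rfl, ?_⟩
  · exact List.isChain_cons_cons.mpr ⟨hij, List.isChain_pair.mpr hjk⟩
  · exact ⟨⟨fun hcol => (hnc hcol).elim, fun _ => hj⟩, trivial⟩

lemma innerOK_of_forall_infix :
    ∀ {p : List V}, (∀ x y z, [x, y, z] <:+: p → G.collider x y z ∧ y ∈ C) → G.innerOK C p
  | [], _ | [_], _ | [_, _], _ => trivial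
  | a :: b :: c :: r, h =>
    have hb := h a b c ⟨[], r, rfl⟩
    ⟨⟨fun _ => Or.inl hb.2, fun hnc => (hnc hb.1).elim⟩,
      innerOK_of_forall_infix fun x y z hw => h x y z (hw.trans (List.suffix_cons a _).isInfix)⟩

def tailAt (G : MixedGraph V) (b c : V) : Prop :=
  G.arrow b c ∨ G.line b c

lemma tailAt.adj {b c : V} (h : G.tailAt b c) : G.adj b c :=
  h.elim (fun h => Or.inr (Or.inl h)) Or.inl

lemma tailAt_of_adj {b c : V} (h : G.adj b c) (hh : ¬ G.headAt c b) : G.tailAt b c := by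
  rcases h with h | h | h | h
  · exact Or.inr h
  · exact Or.inl h
  · exact absurd (Or.inl h) hh
  · exact absurd (Or.inr (G.arc_symm _ _ h)) hh

lemma isAncestral.not_headAt_of_tailAt (hA : G.isAncestral) {b c : V} (h : G.tailAt b c) :
    ¬ G.headAt c b := by
  rcases h with h | h
  · exact fun hh => hA.1 b c hh (.single h)
  · exact hA.2 b c c h

/-- An edge with tails at both ends is a line, and a node on a line has no arrowheads. -/
lemma isAncestral.tailAt_of_tailAt_of_tailAt (hA : G.isAncestral) {a b c : V}
    (hab : G.tailAt a b) (hba : G.tailAt b a) (hbc : G.adj b c) : G.tailAt b c := by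
  have hline : G.line b a := hba.resolve_left fun h => hA.not_headAt_of_tailAt hab (Or.inl h)
  exact tailAt_of_adj hbc (hA.2 b a c hline)

lemma adj_of_tailAt (hA : G.isAncestral) (hU : ¬ ∃ i j k, G.unshieldedNonCollider i j k)
    {b c x : V} (hbc : G.tailAt b c) (hxb : G.adj x b) (hxc : x ≠ c) : G.adj x c := by
  by_contra hxc'
  exact hU ⟨x, b, c, hxb, hbc.adj, hxc, hxc', fun hcol => hA.not_headAt_of_tailAt hbc hcol.2⟩

lemma tailAt_trans (hA : G.isAncestral) (hU : ¬ ∃ i j k, G.unshieldedNonCollider i j k)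
    {a b c : V} (hab : G.tailAt a b) (hbc : G.tailAt b c) (hac : a ≠ c) : G.tailAt a c := by
  refine tailAt_of_adj (adj_of_tailAt hA hU hbc hab.adj hac) fun hca => ?_
  rcases hab with hab | hab
  · rcases hbc with hbc | hbc
    · exact hA.1 a c hca ((ReflTransGen.single hab).tail hbc)
    · exact hA.2 b c a hbc (Or.inl hab)
  · exact hA.2 a b c hab hca

lemma reflGen_tailAt_trans (hA : G.isAncestral) (hU : ¬ ∃ i j k, G.unshieldedNonCollider i j k)
    {a b c : V} (hab : ReflGen G.tailAt a b) (hbc : ReflGen G.tailAt b c) :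
    ReflGen G.tailAt a c := by
  cases hab with
  | refl => exact hbc
  | single hab =>
    cases hbc with
    | refl => exact .single hab
    | single hbc =>
      by_cases hac : a = c
      · exact hac ▸ .refl
      · exact .single (tailAt_trans hA hU hab hbc hac)

lemma reflGen_tailAt_of_anc (hA : G.isAncestral) (hU : ¬ ∃ i j k, G.unshieldedNonCollider i j k)
    {b x : V} (h : G.anc b x) : ReflGen G.tailAt b x := by
  induction h using ReflTransGen.head_induction_on with
  | refl => exact .refl
  | head hby _ ih => exact reflGen_tailAt_trans hA hU (.single (Or.inl hby)) ih

lemma reflGen_adj_of_reflGen_tailAt (hA : G.isAncestral)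
    (hU : ¬ ∃ i j k, G.unshieldedNonCollider i j k) {b c u : V}
    (hbc : ReflGen G.tailAt b c) (hub : ReflGen G.adj u b) : ReflGen G.adj u c := by
  cases hbc with
  | refl => exact hub
  | single hbc =>
    by_cases huc : u = c
    · exact huc ▸ .refl
    · cases hub with
      | refl => exact .single hbc.adj
      | single hub => exact .single (adj_of_tailAt hA hU hbc hub huc)

lemma exists_reflGen_tailAt_of_inner (hA : G.isAncestral)
    (hU : ¬ ∃ i j k, G.unshieldedNonCollider i j k) {a b c : V} (hab : G.adj a b)
    (hbc : G.adj b c) (hb : G.collider a b c → b ∈ C ∨ ∃ x ∈ C, G.anc b x) :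
    (∃ x ∈ C, ReflGen G.tailAt b x) ∨ G.tailAt b a ∨ G.tailAt b c := by
  by_cases hcol : G.collider a b c
  · left
    rcases hb hcol with hbC | ⟨x, hxC, hbx⟩
    · exact ⟨b, hbC, .refl⟩
    · exact ⟨x, hxC, reflGen_tailAt_of_anc hA hU hbx⟩
  · right
    rcases not_and_or.mp hcol with h | h
    · exact Or.inl (tailAt_of_adj (adj_symm_s8 hab) h)
    · exact Or.inr (tailAt_of_adj hbc h)

def stepInto (G : MixedGraph V) (C : Set V) (u v : V) : Prop :=
  G.adj u v ∧ v ∈ C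

/-- `i` and `j` are the ends of a skeleton walk whose inner nodes lie in `C`. -/
def joinedThrough (G : MixedGraph V) (C : Set V) (i j : V) : Prop :=
  ∃ w, ReflTransGen (G.stepInto C) i w ∧ G.adj w j

lemma eq_or_mem_of_reflTransGen_stepInto {w : V} (h : ReflTransGen (G.stepInto C) i w) :
    w = i ∨ w ∈ C := by
  rcases h.cases_tail with rfl | ⟨_, _, hw⟩
  exacts [Or.inl rfl, Or.inr hw.2]

lemma joinedThrough.exists_walk (h : G.joinedThrough C i j) :
    ∃ l : List V, l.IsChain G.adj ∧ l.head? = some i ∧ l.getLast? = some j ∧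
      ∀ x ∈ l, x ∈ C ∨ x = i ∨ x = j := by
  obtain ⟨w, hw, hwj⟩ := h
  induction hw using ReflTransGen.head_induction_on with
  | refl => exact ⟨[w, j], List.isChain_pair.mpr hwj, rfl, rfl, by simp⟩
  | @head a v hav _ ih =>
    obtain ⟨l, hc, hh, hl, hmem⟩ := ih
    refine ⟨a :: l, List.isChain_cons.mpr ⟨by simpa [hh] using hav.1, hc⟩, rfl,
      by simp [List.getLast?_cons, hl], ?_⟩
    simp only [List.mem_cons, forall_eq_or_imp, true_or, or_true, true_and]
    intro x hx
    rcases hmem x hx with hxC | rfl | rfl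
    exacts [Or.inl hxC, Or.inl hav.2, Or.inr (Or.inr rfl)]

lemma joinedThrough_iff_of_sameSkeleton {G' : MixedGraph V} (h : G.sameSkeleton G') :
    G.joinedThrough C i j ↔ G'.joinedThrough C i j := by
  have hadj : G.adj = G'.adj := funext fun a => funext fun b => propext (h a b)
  unfold joinedThrough stepInto
  rw [hadj]

/-- The invariant carried along an m-connecting path starting at `i`, at consecutive nodes
`a, b` of the path. -/
def covered (G : MixedGraph V) (C : Set V) (i a b : V) : Prop :=
  ∃ w, ReflTransGen (G.stepInto C) i w ∧ ReflGen G.adj a w ∧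
    (ReflGen G.tailAt a w ∨ G.tailAt a b)

lemma covered_start (b : V) : G.covered C i i b :=
  ⟨i, .refl, .refl, Or.inl .refl⟩

lemma reflGen_adj_next (hA : G.isAncestral) (hU : ¬ ∃ i j k, G.unshieldedNonCollider i j k)
    {a b w : V} (haw : ReflGen G.adj a w) (ha : ReflGen G.tailAt a w ∨ G.tailAt a b)
    (hab : G.adj a b) : ReflGen G.adj b w := by
  rcases ha with haw' | hab'
  · exact reflGen_adj_of_reflGen_tailAt hA hU haw' (.single (adj_symm_s8 hab))
  · exact reflGen_adj_symm
      (reflGen_adj_of_reflGen_tailAt hA hU (.single hab') (reflGen_adj_symm haw))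

lemma covered.next (hA : G.isAncestral) (hU : ¬ ∃ i j k, G.unshieldedNonCollider i j k)
    {a b c : V} (h : G.covered C i a b) (hab : G.adj a b) (hbc : G.adj b c)
    (hb : G.collider a b c → b ∈ C ∨ ∃ x ∈ C, G.anc b x) : G.covered C i b c := by
  obtain ⟨w, hw, haw, ha⟩ := h
  have hbw := reflGen_adj_next hA hU haw ha hab
  rcases exists_reflGen_tailAt_of_inner hA hU hab hbc hb with ⟨x, hxC, hbx⟩ | hba | hbc'
  · refine ⟨x, ?_, reflGen_adj_of_reflGen_tailAt hA hU hbx .refl, Or.inl hbx⟩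
    cases reflGen_adj_of_reflGen_tailAt hA hU hbx (reflGen_adj_symm hbw) with
    | refl => exact hw
    | single hwx => exact hw.tail ⟨hwx, hxC⟩
  · rcases ha with haw' | hab'
    · exact ⟨w, hw, hbw, Or.inl (reflGen_tailAt_trans hA hU (.single hba) haw')⟩
    · exact ⟨w, hw, hbw, Or.inr (hA.tailAt_of_tailAt_of_tailAt hab' hba hbc)⟩
  · exact ⟨w, hw, hbw, Or.inr hbc'⟩

lemma covered.joinedThrough (hA : G.isAncestral) (hU : ¬ ∃ i j k, G.unshieldedNonCollider i j k)
    {a : V} (h : G.covered C i a j) (haj : G.adj a j) (hij : i ≠ j) (hj : j ∉ C) :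
    G.joinedThrough C i j := by
  obtain ⟨w, hw, haw, ha⟩ := h
  cases reflGen_adj_next hA hU haw ha haj with
  | refl =>
    rcases eq_or_mem_of_reflTransGen_stepInto hw with rfl | hjC
    exacts [(hij rfl).elim, (hj hjC).elim]
  | single hjw => exact ⟨w, hw, adj_symm_s8 hjw⟩

lemma covered.joinedThrough_of_innerOK (hA : G.isAncestral)
    (hU : ¬ ∃ i j k, G.unshieldedNonCollider i j k) (hij : i ≠ j) (hj : j ∉ C) :
    ∀ {a b : V} {l : List V}, G.covered C i a b → (a :: b :: l).IsChain G.adj →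
      G.innerOK C (a :: b :: l) → (a :: b :: l).getLast? = some j → G.joinedThrough C i j
  | _, b, [], h, hc, _, hl => by
    obtain rfl : b = j := by simpa using hl
    exact h.joinedThrough hA hU (List.isChain_pair.mp hc) hij hj
  | _, _, c :: l, h, hc, hok, hl => by
    obtain ⟨hab, hc'⟩ := List.isChain_cons_cons.mp hc
    refine (h.next hA hU hab (List.isChain_cons_cons.mp hc').1 hok.1.1).joinedThrough_of_innerOK
      hA hU hij hj hc' hok.2 ?_
    rwa [List.getLast?_cons_cons] at hl

lemma joinedThrough_of_mConnecting (hA : G.isAncestral)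
    (hU : ¬ ∃ i j k, G.unshieldedNonCollider i j k) (hij : i ≠ j) (hj : j ∉ C) {p : List V}
    (hp : G.mConnecting C i j p) : G.joinedThrough C i j := by
  obtain ⟨⟨-, hc⟩, hlen, hh, hl, hok⟩ := hp
  rcases p with _ | ⟨a, _ | ⟨b, l⟩⟩
  · simp at hlen
  · simp at hlen
  · obtain rfl : a = i := by simpa using hh
    exact (covered_start b).joinedThrough_of_innerOK hA hU hij hj hc hok hl

lemma mConnecting_of_shortcutFree (hU : ¬ ∃ i j k, G.unshieldedNonCollider i j k)
    {p : List V} (hij : i ≠ j) (hnd : p.Nodup) (hc : p.IsChain G.adj) (hh : p.head? = some i)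
    (hl : p.getLast? = some j) (hmem : ∀ x ∈ p, x ∈ C ∨ x = i ∨ x = j)
    (hfree : ∀ x y z, [x, y, z] <:+: p → ¬ G.adj x z) : G.mConnecting C i j p := by
  refine ⟨⟨hnd, hc⟩, List.two_le_length_of_head?_of_getLast? hh hl hij, hh, hl,
    innerOK_of_forall_infix fun x y z hw => ⟨?_, ?_⟩⟩
  · have hxyz : [x, y, z].IsChain G.adj := hc.infix hw
    have hxz : [x, y, z].Nodup := hnd.sublist hw.sublist
    simp only [List.isChain_cons_cons, List.isChain_singleton, and_true] at hxyz
    simp only [List.nodup_cons, List.mem_cons, List.not_mem_nil, or_false] at hxz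
    by_contra hnc
    exact hU ⟨x, y, z, hxyz.1, hxyz.2, fun h => hxz.1 (Or.inr h), hfree x y z hw, hnc⟩
  · rcases hmem y (hw.subset (by simp)) with hy | rfl | rfl
    · exact hy
    · exact absurd rfl (List.ne_of_infix_of_head? hnd hh (.trans ⟨[], [z], rfl⟩ hw))
    · exact absurd rfl (List.ne_of_infix_of_getLast? hnd hl (.trans ⟨[x], [], rfl⟩ hw))

theorem exists_mConnecting_iff_joinedThrough (hA : G.isAncestral)
    (hU : ¬ ∃ i j k, G.unshieldedNonCollider i j k) (hij : i ≠ j) (hj : j ∉ C) :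
    (∃ p, G.mConnecting C i j p) ↔ G.joinedThrough C i j := by
  refine ⟨fun ⟨_, hp⟩ => joinedThrough_of_mConnecting hA hU hij hj hp, fun h => ?_⟩
  obtain ⟨l, hc, hh, hl, hmem⟩ := h.exists_walk
  obtain ⟨p, hsub, hph, hpl, hpc, hnd, hfree⟩ := hc.exists_shortcutFree_sublist
  exact ⟨p, mConnecting_of_shortcutFree hU hij hnd hpc (hph.trans hh) (hpl.trans hl)
    (fun x hx => hmem x (hsub.subset hx)) hfree⟩

theorem markovEquiv_of_sameSkeleton {G' : MixedGraph V} (hA : G.isAncestral)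
    (hU : ¬ ∃ i j k, G.unshieldedNonCollider i j k) (hA' : G'.isAncestral)
    (hU' : ¬ ∃ i j k, G'.unshieldedNonCollider i j k) (h : G.sameSkeleton G') :
    G.markovEquiv G' := by
  intro A B C hAB _ hBC
  have key : ∀ i ∈ A, ∀ j ∈ B,
      (∃ p, G.mConnecting C i j p) ↔ ∃ p, G'.mConnecting C i j p := fun i hi j hj => by
    have hij := hAB.ne_of_mem hi hj
    have hjC := Set.disjoint_left.mp hBC hj
    rw [exists_mConnecting_iff_joinedThrough hA hU hij hjC,
      exists_mConnecting_iff_joinedThrough hA' hU' hij hjC]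
    exact joinedThrough_iff_of_sameSkeleton h
  refine not_congr ⟨fun ⟨i, j, p, hi, hj, hp⟩ => ?_, fun ⟨i, j, p, hi, hj, hp⟩ => ?_⟩
  · obtain ⟨q, hq⟩ := (key i hi j hj).mp ⟨p, hp⟩
    exact ⟨i, j, q, hi, hj, hq⟩
  · obtain ⟨q, hq⟩ := (key i hi j hj).mpr ⟨p, hp⟩
    exact ⟨i, j, q, hi, hj, hq⟩

lemma isBG.arc_of_adj (hB : G.isBG) {a b : V} (h : G.adj a b) : G.arc a b := by
  rcases h with h | h | h | h
  exacts [(hB.2 _ _ h).elim, (hB.1 _ _ h).elim, (hB.1 _ _ h).elim, h]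

lemma isBG.isAncestral (hB : G.isBG) : G.isAncestral := by
  refine ⟨fun a b hba hab => ?_, fun a b _ hl => (hB.2 a b hl).elim⟩
  rcases hab.cases_tail with rfl | ⟨_, _, h⟩
  · rcases hba with h | h
    exacts [G.arrow_irrefl _ h, G.arc_irrefl _ h]
  · exact hB.1 _ _ h

lemma isBG.not_exists_unshieldedNonCollider (hB : G.isBG) :
    ¬ ∃ i j k, G.unshieldedNonCollider i j k :=
  fun ⟨_, _, _, hij, hjk, _, _, hnc⟩ =>
    hnc ⟨Or.inr (hB.arc_of_adj hij), Or.inr (hB.arc_of_adj (adj_symm_s8 hjk))⟩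

lemma isBG.adj_of_mConnecting_empty (hB : G.isBG) (hij : i ≠ j) {p : List V}
    (hp : G.mConnecting ∅ i j p) : G.adj i j := by
  obtain ⟨w, hw, hwj⟩ := joinedThrough_of_mConnecting hB.isAncestral
    hB.not_exists_unshieldedNonCollider hij (Set.notMem_empty j) hp
  rcases eq_or_mem_of_reflTransGen_stepInto hw with rfl | hw
  exacts [hwj, hw.elim]

def bidirectedSkeleton (G : MixedGraph V) : MixedGraph V where
  line _ _ := False
  arrow _ _ := False
  arc := G.adj
  line_symm _ _ h := h
  arc_symm _ _ := adj_symm_s8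
  line_irrefl _ h := h
  arrow_irrefl _ h := h
  arc_irrefl _ h := ne_of_adj h rfl

lemma bidirectedSkeleton_isBG : G.bidirectedSkeleton.isBG :=
  ⟨fun _ _ h => h, fun _ _ h => h⟩

lemma sameSkeleton_bidirectedSkeleton : G.sameSkeleton G.bidirectedSkeleton :=
  fun _ _ => by simp [adj, bidirectedSkeleton]

end MixedGraph

theorem mag_equiv_some_bg_iff_general {V : Type*} (H : MixedGraph V)
    (hH : H.isMAG) :
    (∃ B : MixedGraph V, B.isBG ∧ H.markovEquiv B) ↔
      ¬ ∃ i j k, H.unshieldedNonCollider i j k := by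
  obtain ⟨hA, hMax⟩ := hH
  constructor
  · rintro ⟨B, hB, hHB⟩ ⟨i, j, k, hijk⟩
    have hik := hijk.2.2.1
    have hnadj := hijk.2.2.2.1
    have hd : Disjoint ({i} : Set V) {k} := Set.disjoint_singleton.mpr hik
    have hBik : B.adj i k := by
      have hconn : ¬ B.mSep {i} {k} ∅ := fun hsep =>
        (hHB _ _ _ hd (Set.disjoint_empty _) (Set.disjoint_empty _)).mpr hsep
          ⟨i, k, _, rfl, rfl, hijk.mConnecting (Set.notMem_empty j)⟩
      obtain ⟨i', k', p, hi, hk, hp⟩ := not_not.mp hconn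
      obtain ⟨rfl, rfl⟩ : i' = i ∧ k' = k := ⟨hi, hk⟩
      exact hB.adj_of_mConnecting_empty hik hp
    obtain ⟨C, hiC, hkC, hsep⟩ := hMax i k hik hnadj
    exact (hHB _ _ _ hd (Set.disjoint_singleton_left.mpr hiC)
      (Set.disjoint_singleton_left.mpr hkC)).mp hsep
        ⟨i, k, _, rfl, rfl, MixedGraph.mConnecting_pair hBik⟩
  · intro hU
    exact ⟨H.bidirectedSkeleton, MixedGraph.bidirectedSkeleton_isBG,
      MixedGraph.markovEquiv_of_sameSkeleton hA hU MixedGraph.bidirectedSkeleton_isBG.isAncestral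
        MixedGraph.bidirectedSkeleton_isBG.not_exists_unshieldedNonCollider
        MixedGraph.sameSkeleton_bidirectedSkeleton⟩

/-- A maximal ancestral graph is Markov equivalent to some bidirected graph
iff it contains no unshielded non-collider V-configuration. -/
theorem mag_equiv_some_bg_iff {V : Type*} [Fintype V] (H : MixedGraph V)
    (hH : H.isMAG) :
    (∃ B : MixedGraph V, B.isBG ∧ H.markovEquiv B) ↔
      ¬ ∃ i j k, H.unshieldedNonCollider i j k :=
  mag_equiv_some_bg_iff_general H hH
end
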